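/- arXiv:1604.06021 — 3 statements merged into one kernel-verified Lean document; each statement's English description precedes it below -/
import Mathlib

section
/- Let E ⊆ ℝ² be a measurable set with 0 < μ(E) < ∞ (μ the Lebesgue measure), let N ≥ 1 and let ν : Fin N → ℝ² be a finite family of points (the vertices). Let v : ℝ² → ℝ be differentiable with derivative integrable on E. Then there exists a unique affine map q : ℝ² → ℝ such that (i) ∫_E ⟪∇q(x) − ∇v(x), c⟫ dx = 0 for every constant vector c ∈ ℝ², and (ii) (1/N)·∑_{i} q(ν_i) = (1/N)·∑_{i} v(ν_i). -/
/-!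
The gradient of an affine map `q` is the constant vector representing its linear part, and
condition (i) says that this constant minus `∇v` integrates to zero over `E`. Since
`0 < |E| < ∞`, this forces the linear part of `q` to be `c ↦ ⟪⨍_E ∇v, c⟫`. An affine map with a
prescribed linear part is determined by its constant term, which the vertex average fixes
uniquely because `N ≠ 0`.
-/

open MeasureTheory
open scoped RealInnerProductSpace

section Integral

variable {α V : Type*} [MeasurableSpace α] {μ : Measure α}
  [NormedAddCommGroup V] [InnerProductSpace ℝ V] [CompleteSpace V]

theorem forall_integral_inner_eq_zero_iff {f : α → V} (hf : Integrable f μ) :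
    (∀ c : V, ∫ x, ⟪f x, c⟫ ∂μ = 0) ↔ ∫ x, f x ∂μ = 0 := by
  simp_rw [real_inner_comm _ (f _), integral_inner hf]
  exact ⟨fun h => inner_self_eq_zero.mp (h _), fun h c => by rw [h, inner_zero_right]⟩

theorem forall_setIntegral_inner_const_sub_eq_zero_iff {s : Set α} (h₀ : μ s ≠ 0)
    (hfin : μ s ≠ ⊤) {f : α → V} (hf : IntegrableOn f s μ) (w : V) :
    (∀ c : V, ∫ x in s, ⟪w - f x, c⟫ ∂μ = 0) ↔ w = ⨍ x in s, f x ∂μ := by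
  have hpos : μ.real s ≠ 0 := ENNReal.toReal_ne_zero.mpr ⟨h₀, hfin⟩
  rw [forall_integral_inner_eq_zero_iff (f := fun x => w - f x) ((integrableOn_const hfin).sub hf),
    integral_sub (integrableOn_const hfin (C := w)) hf, setIntegral_const,
    ← measure_smul_setAverage f hfin, ← smul_sub, smul_eq_zero_iff_right hpos, sub_eq_zero]

end Integral

namespace AffineMap

section Gradient

variable {V : Type*} [NormedAddCommGroup V] [InnerProductSpace ℝ V] [FiniteDimensional ℝ V]

theorem inner_gradient (q : V →ᵃ[ℝ] ℝ) (x c : V) : ⟪gradient q x, c⟫ = q.linear c := by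
  let q' : V →ᴬ[ℝ] ℝ := ⟨q, q.continuous_of_finiteDimensional⟩
  have hq : HasFDerivAt q q'.contLinear x := q'.hasFDerivAt
  rw [gradient, hq.fderiv, InnerProductSpace.toDual_symm_apply]
  rfl

theorem gradient_eq_const (q : V →ᵃ[ℝ] ℝ) : gradient q = fun _ => gradient q 0 :=
  funext fun _ => ext_inner_right ℝ fun c => by rw [inner_gradient, inner_gradient]

theorem gradient_eq_iff (q : V →ᵃ[ℝ] ℝ) (x g : V) :
    gradient q x = g ↔ q.linear = innerₛₗ ℝ g := by
  rw [ext_iff_inner_right ℝ, LinearMap.ext_iff]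
  simp only [inner_gradient, innerₛₗ_apply_apply]

end Gradient

section VertexSum

variable {k V W ι : Type*} [Field k] [AddCommGroup V] [Module k V] [AddCommGroup W] [Module k W]
  [Fintype ι]

theorem sum_apply_eq (q : V →ᵃ[k] W) (ν : ι → V) :
    ∑ i, q (ν i) = ∑ i, q.linear (ν i) + Fintype.card ι • q 0 := by
  simp only [fun i => congrFun q.decomp (ν i), Pi.add_apply, Finset.sum_add_distrib,
    Finset.sum_const, Finset.card_univ]

theorem existsUnique_linear_eq_sum_eq [CharZero k] [Nonempty ι] (L : V →ₗ[k] W) (ν : ι → V)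
    (b : W) : ∃! q : V →ᵃ[k] W, q.linear = L ∧ ∑ i, q (ν i) = b := by
  have hcard : (Fintype.card ι : k) ≠ 0 := Nat.cast_ne_zero.mpr Fintype.card_ne_zero
  set c : W := (Fintype.card ι : k)⁻¹ • (b - ∑ i, L (ν i))
  have hc : ∀ a : W, ∑ i, L (ν i) + Fintype.card ι • a = b ↔ a = c := fun a => by
    rw [← Nat.cast_smul_eq_nsmul k, ← eq_sub_iff_add_eq', eq_inv_smul_iff₀ hcard]
  have hlin : (L.toAffineMap + const k V c).linear = L := by simp
  refine ⟨L.toAffineMap + const k V c, ⟨hlin, ?_⟩, ?_⟩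
  · rw [sum_apply_eq, hlin, hc]
    simp
  · rintro q ⟨hqL, hqb⟩
    refine ext_linear (p := 0) (by simp [hqL]) ?_
    rw [sum_apply_eq, hqL, hc] at hqb
    simp [hqb]

end VertexSum

end AffineMap

theorem ritz_projector_well_defined_general
    (E : Set (EuclideanSpace ℝ (Fin 2)))
    (hpos : 0 < volume E) (hfin : volume E < ⊤)
    (N : ℕ) (hN : 1 ≤ N) (ν : Fin N → EuclideanSpace ℝ (Fin 2))
    (v : EuclideanSpace ℝ (Fin 2) → ℝ)
    (hint : IntegrableOn (gradient v) E volume) :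
    ∃! q : AffineMap ℝ (EuclideanSpace ℝ (Fin 2)) ℝ,
      (∀ c : EuclideanSpace ℝ (Fin 2),
        ∫ x in E, ⟪gradient (⇑q) x - gradient v x, c⟫ = 0) ∧
      (1 / (N : ℝ)) * ∑ i, q (ν i) = (1 / (N : ℝ)) * ∑ i, v (ν i) := by
  have hmean : ∀ q : AffineMap ℝ (EuclideanSpace ℝ (Fin 2)) ℝ,
      (∀ c, ∫ x in E, ⟪gradient (⇑q) x - gradient v x, c⟫ = 0) ↔
        q.linear = innerₛₗ ℝ (⨍ x in E, gradient v x) := fun q => by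
    rw [q.gradient_eq_const]
    beta_reduce
    rw [forall_setIntegral_inner_const_sub_eq_zero_iff hpos.ne' hfin.ne hint, q.gradient_eq_iff]
  have hN₀ : 1 / (N : ℝ) ≠ 0 := one_div_ne_zero (Nat.cast_ne_zero.mpr (by omega))
  have : Nonempty (Fin N) := ⟨⟨0, hN⟩⟩
  simp_rw [hmean, mul_right_inj' hN₀]
  exact AffineMap.existsUnique_linear_eq_sum_eq _ _ _

/-- Well-definedness of the Ritz projector Π∇ of the lowest-order virtual element
method: for any `v` differentiable with gradient integrable on `E`, there is a unique
affine map `q` whose gradient differs from that of `v` orthogonally (in the `L²(E)`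
sense) to every constant vector field, and whose vertex-average matches that of `v`. -/
theorem ritz_projector_well_defined
    (E : Set (EuclideanSpace ℝ (Fin 2))) (hE : MeasurableSet E)
    (hpos : 0 < volume E) (hfin : volume E < ⊤)
    (N : ℕ) (hN : 1 ≤ N) (ν : Fin N → EuclideanSpace ℝ (Fin 2))
    (v : EuclideanSpace ℝ (Fin 2) → ℝ)
    (hv : Differentiable ℝ v)
    (hint : IntegrableOn (gradient v) E volume) :
    ∃! q : AffineMap ℝ (EuclideanSpace ℝ (Fin 2)) ℝ,
      (∀ c : EuclideanSpace ℝ (Fin 2),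
        ∫ x in E, ⟪gradient (⇑q) x - gradient v x, c⟫ = 0) ∧
      (1 / (N : ℝ)) * ∑ i, q (ν i) = (1 / (N : ℝ)) * ∑ i, v (ν i) :=
  ritz_projector_well_defined_general E hpos hfin N hN ν v hint
end

section
/- Let N ≥ 1, let D be a real N×3 matrix and B̃ a real 3×N matrix such that the 3×3 matrix B̃D is invertible, and set Π := (B̃D)⁻¹B̃. Let B be the 3×N matrix whose first row is zero and whose second and third rows coincide with those of B̃, let G := B·D, and let K := Πᵀ·G·Π + (I_N − DΠ)ᵀ·(I_N − DΠ). Then Dᵀ·K = G·Π = B. -/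
/-!
`Π = (B̃D)⁻¹B̃` is a left inverse of `D`, so `I − DΠ` annihilates `D` and the stabilisation
term of `K` drops out of `DᵀK`, leaving `(ΠD)ᵀGΠ = GΠ = BDΠ`. Moreover `DΠ` is a right
identity for `B̃`, hence for every matrix whose rows are rows of `B̃` or zero, such as `B`.
-/

open Matrix

namespace Matrix

variable {m n R : Type*} [Fintype n]

theorem nonsing_inv_mul_mul_eq_one [Fintype m] [DecidableEq m] [CommRing R]
    {A : Matrix m n R} {D : Matrix n m R} (h : IsUnit (A * D)) : (A * D)⁻¹ * A * D = 1 := by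
  rw [Matrix.mul_assoc, nonsing_inv_mul _ ((isUnit_iff_isUnit_det _).mp h)]

theorem mul_mul_nonsing_inv_mul_eq_self [Fintype m] [DecidableEq m] [CommRing R]
    {A : Matrix m n R} {D : Matrix n m R} (h : IsUnit (A * D)) :
    A * (D * ((A * D)⁻¹ * A)) = A := by
  rw [← Matrix.mul_assoc, ← Matrix.mul_assoc,
    mul_nonsing_inv _ ((isUnit_iff_isUnit_det _).mp h), Matrix.one_mul]

theorem mul_eq_self_of_rows_zero_or_eq [NonUnitalNonAssocSemiring R]
    {A B : Matrix m n R} {P : Matrix n n R} (hA : A * P = A)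
    (hrows : ∀ i, B i = 0 ∨ B i = A i) : B * P = B := by
  ext i : 1
  rw [mul_apply_eq_vecMul]
  rcases hrows i with hzero | hrow
  · rw [hzero, zero_vecMul]
  · rw [hrow, ← mul_apply_eq_vecMul, hA]

theorem one_sub_mul_mul_eq_zero [Fintype m] [DecidableEq m] [DecidableEq n] [Ring R]
    {D : Matrix n m R} {P : Matrix m n R} (hPD : P * D = 1) : (1 - D * P) * D = 0 := by
  rw [Matrix.sub_mul, Matrix.one_mul, Matrix.mul_assoc, hPD, Matrix.mul_one, sub_self]

theorem transpose_mul_stiffness [Fintype m] [DecidableEq m] [DecidableEq n] [CommRing R]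
    {D : Matrix n m R} {P : Matrix m n R} (G : Matrix m m R) (hPD : P * D = 1) :
    Dᵀ * (Pᵀ * G * P + (1 - D * P)ᵀ * (1 - D * P)) = G * P := by
  have hconsistency : Dᵀ * Pᵀ = 1 := by rw [← transpose_mul, hPD, transpose_one]
  have hstabilisation : Dᵀ * (1 - D * P)ᵀ = 0 := by
    rw [← transpose_mul, one_sub_mul_mul_eq_zero hPD, transpose_zero]
  rw [Matrix.mul_add, ← Matrix.mul_assoc, ← Matrix.mul_assoc, hconsistency, Matrix.one_mul,
    ← Matrix.mul_assoc, hstabilisation, Matrix.zero_mul, add_zero]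

end Matrix

theorem vem_patch_test_general
    (N : ℕ)
    (D : Matrix (Fin N) (Fin 3) ℝ) (Bt : Matrix (Fin 3) (Fin N) ℝ)
    (h : IsUnit (Bt * D))
    (B : Matrix (Fin 3) (Fin N) ℝ)
    (hB0 : ∀ j, B 0 j = 0)
    (hB : ∀ i : Fin 3, i ≠ 0 → ∀ j, B i j = Bt i j)
    (Proj : Matrix (Fin 3) (Fin N) ℝ) (hProj : Proj = (Bt * D)⁻¹ * Bt)
    (G : Matrix (Fin 3) (Fin 3) ℝ) (hG : G = B * D)
    (K : Matrix (Fin N) (Fin N) ℝ)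
    (hK : K = Projᵀ * G * Proj +
      ((1 : Matrix (Fin N) (Fin N) ℝ) - D * Proj)ᵀ *
        ((1 : Matrix (Fin N) (Fin N) ℝ) - D * Proj)) :
    Dᵀ * K = G * Proj ∧ G * Proj = B := by
  subst hProj hG hK
  have hrows : ∀ i, B i = 0 ∨ B i = Bt i := fun i => by
    by_cases hi : i = 0
    · exact .inl (hi ▸ funext hB0)
    · exact .inr (funext (hB i hi))
  have hGP : B * D * ((Bt * D)⁻¹ * Bt) = B := by
    rw [Matrix.mul_assoc]
    exact mul_eq_self_of_rows_zero_or_eq (mul_mul_nonsing_inv_mul_eq_self h) hrows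
  exact ⟨transpose_mul_stiffness _ (nonsing_inv_mul_mul_eq_one h), hGP⟩

/-- Matrix form of the polynomial consistency property (patch test) of the
lowest-order VEM local stiffness matrix: with `Π = (B̃D)⁻¹B̃`, `B` equal to `B̃` with
its first row zeroed, `G = BD`, and `K = ΠᵀGΠ + (I − DΠ)ᵀ(I − DΠ)`, one has
`DᵀK = GΠ = B`. -/
theorem vem_patch_test
    (N : ℕ) (hN : 1 ≤ N)
    (D : Matrix (Fin N) (Fin 3) ℝ) (Bt : Matrix (Fin 3) (Fin N) ℝ)
    (h : IsUnit (Bt * D))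
    (B : Matrix (Fin 3) (Fin N) ℝ)
    (hB0 : ∀ j, B 0 j = 0)
    (hB : ∀ i : Fin 3, i ≠ 0 → ∀ j, B i j = Bt i j)
    (Proj : Matrix (Fin 3) (Fin N) ℝ) (hProj : Proj = (Bt * D)⁻¹ * Bt)
    (G : Matrix (Fin 3) (Fin 3) ℝ) (hG : G = B * D)
    (K : Matrix (Fin N) (Fin N) ℝ)
    (hK : K = Projᵀ * G * Proj +
      ((1 : Matrix (Fin N) (Fin N) ℝ) - D * Proj)ᵀ *
        ((1 : Matrix (Fin N) (Fin N) ℝ) - D * Proj)) :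
    Dᵀ * K = G * Proj ∧ G * Proj = B :=
  vem_patch_test_general N D Bt h B hB0 hB Proj hProj G hG K hK
end

section
/- Let N ≥ 1, let D be a real N×3 matrix and B̃ a real 3×N matrix such that the 3×3 matrix B̃D is invertible, and set Π := (B̃D)⁻¹B̃. Let G be any symmetric positive semidefinite 3×3 real matrix and let K := Πᵀ·G·Π + (I_N − DΠ)ᵀ·(I_N − DΠ). Then for v ∈ ℝ^N one has Kv = 0 if and only if there exists c ∈ ℝ³ with v = Dc and Gc = 0; that is, the kernel of K is the image under D of the kernel of G. -/
open Matrix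

/-!
A sum of two positive semidefinite matrices annihilates `v` exactly when both summands do, because
the quadratic form of a positive semidefinite matrix vanishes only on its kernel. For
`K = ΠᵀGΠ + (I − DΠ)ᵀ(I − DΠ)` this gives `Kv = 0 ↔ G(Πv) = 0 ∧ v = D(Πv)`, and since `ΠD = I`,
`v = D(Πv)` says precisely that `v` lies in the image of `D`, with `Πv` as the unique preimage.
-/

namespace Matrix

open scoped ComplexOrder

variable {n k 𝕜 : Type*} [Fintype n] [Fintype k] [RCLike 𝕜]

theorem PosSemidef.add_mulVec_eq_zero_iff {A B : Matrix n n 𝕜} (hA : A.PosSemidef)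
    (hB : B.PosSemidef) (x : n → 𝕜) : (A + B) *ᵥ x = 0 ↔ A *ᵥ x = 0 ∧ B *ᵥ x = 0 := by
  rw [← (hA.add hB).dotProduct_mulVec_zero_iff, ← hA.dotProduct_mulVec_zero_iff,
    ← hB.dotProduct_mulVec_zero_iff, add_mulVec, dotProduct_add]
  exact add_eq_zero_iff_of_nonneg (hA.dotProduct_mulVec_nonneg x) (hB.dotProduct_mulVec_nonneg x)

theorem PosSemidef.conjTranspose_mul_mul_same_mulVec_eq_zero_iff {G : Matrix k k 𝕜}
    (hG : G.PosSemidef) (P : Matrix k n 𝕜) (x : n → 𝕜) :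
    (Pᴴ * G * P) *ᵥ x = 0 ↔ G *ᵥ (P *ᵥ x) = 0 := by
  rw [← (hG.conjTranspose_mul_mul_same P).dotProduct_mulVec_zero_iff,
    ← hG.dotProduct_mulVec_zero_iff, ← mulVec_mulVec, ← mulVec_mulVec, dotProduct_mulVec,
    vecMul_conjTranspose, star_star]

section Projector

variable {R : Type*} [Ring R]

theorem one_sub_mul_mulVec_eq_zero_iff [DecidableEq n] (D : Matrix n k R) (P : Matrix k n R)
    (v : n → R) : (1 - D * P) *ᵥ v = 0 ↔ D *ᵥ (P *ᵥ v) = v := by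
  rw [sub_mulVec, one_mulVec, ← mulVec_mulVec, sub_eq_zero, eq_comm]

theorem exists_eq_mulVec_and_iff_of_mul_eq_one [DecidableEq k] {D : Matrix n k R}
    {P : Matrix k n R} (hPD : P * D = 1) (p : (k → R) → Prop) (v : n → R) :
    (∃ c, v = D *ᵥ c ∧ p c) ↔ D *ᵥ (P *ᵥ v) = v ∧ p (P *ᵥ v) := by
  refine ⟨?_, fun ⟨hv, hp⟩ ↦ ⟨P *ᵥ v, hv.symm, hp⟩⟩
  rintro ⟨c, rfl, hc⟩
  have hPDc : P *ᵥ (D *ᵥ c) = c := by rw [mulVec_mulVec, hPD, one_mulVec]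
  rw [hPDc]
  exact ⟨rfl, hc⟩

end Projector

end Matrix

theorem vem_stiffness_matrix_kernel_general
    (N : ℕ)
    (D : Matrix (Fin N) (Fin 3) ℝ) (Bt : Matrix (Fin 3) (Fin N) ℝ)
    (h : IsUnit (Bt * D))
    (Proj : Matrix (Fin 3) (Fin N) ℝ) (hProj : Proj = (Bt * D)⁻¹ * Bt)
    (G : Matrix (Fin 3) (Fin 3) ℝ) (hGpsd : G.PosSemidef)
    (K : Matrix (Fin N) (Fin N) ℝ)
    (hK : K = Projᵀ * G * Proj +
      ((1 : Matrix (Fin N) (Fin N) ℝ) - D * Proj)ᵀ *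
        ((1 : Matrix (Fin N) (Fin N) ℝ) - D * Proj)) :
    ∀ v : Fin N → ℝ, K *ᵥ v = 0 ↔ ∃ c : Fin 3 → ℝ, v = D *ᵥ c ∧ G *ᵥ c = 0 := by
  intro v
  have hPD : Proj * D = 1 := by
    rw [hProj, Matrix.mul_assoc, nonsing_inv_mul _ ((isUnit_iff_isUnit_det _).mp h)]
  rw [← conjTranspose_eq_transpose_of_trivial, ← conjTranspose_eq_transpose_of_trivial] at hK
  rw [hK, (hGpsd.conjTranspose_mul_mul_same Proj).add_mulVec_eq_zero_iff
      (posSemidef_conjTranspose_mul_self _),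
    hGpsd.conjTranspose_mul_mul_same_mulVec_eq_zero_iff, conjTranspose_mul_self_mulVec_eq_zero,
    one_sub_mul_mulVec_eq_zero_iff, exists_eq_mulVec_and_iff_of_mul_eq_one hPD, and_comm]

/-- Kernel characterisation of the lowest-order VEM local stiffness matrix
`K = ΠᵀGΠ + (I − DΠ)ᵀ(I − DΠ)`: with `Π = (B̃D)⁻¹B̃` and `G` symmetric positive
semidefinite, `Kv = 0` iff `v = Dc` for some `c` with `Gc = 0`; i.e. the kernel of
`K` is the image under `D` of the kernel of `G`. -/
theorem vem_stiffness_matrix_kernel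
    (N : ℕ) (hN : 1 ≤ N)
    (D : Matrix (Fin N) (Fin 3) ℝ) (Bt : Matrix (Fin 3) (Fin N) ℝ)
    (h : IsUnit (Bt * D))
    (Proj : Matrix (Fin 3) (Fin N) ℝ) (hProj : Proj = (Bt * D)⁻¹ * Bt)
    (G : Matrix (Fin 3) (Fin 3) ℝ) (hGsymm : G.IsSymm) (hGpsd : G.PosSemidef)
    (K : Matrix (Fin N) (Fin N) ℝ)
    (hK : K = Projᵀ * G * Proj +
      ((1 : Matrix (Fin N) (Fin N) ℝ) - D * Proj)ᵀ *
        ((1 : Matrix (Fin N) (Fin N) ℝ) - D * Proj)) :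
    ∀ v : Fin N → ℝ, K *ᵥ v = 0 ↔ ∃ c : Fin 3 → ℝ, v = D *ᵥ c ∧ G *ᵥ c = 0 :=
  vem_stiffness_matrix_kernel_general N D Bt h Proj hProj G hGpsd K hK
end
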